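/- Let H ∈ ℝ^{m×n} be the incidence matrix of an oriented graph, H̄ = H ⊗ I_d, and let p ∈ ℝ^{dn} be a configuration whose edge vectors e_k = (H̄p)_k ∈ ℝ^d are all nonzero, with bearings g_k = e_k/‖e_k‖. Let L_B = H̄ᵀ Π H̄ with Π = blkdiag(π_{g_1},…,π_{g_m}), and let U = 1_n ⊗ I_d ∈ ℝ^{dn×d}. Then the column span of U together with the vector p is contained in the null space of L_B (i.e., L_B U = 0 and L_B p = 0), and consequently rank(L_B) ≤ dn − d − 1. -/

import Mathlib

/-!
Every row of `H` has one `1` and one `-1`, so `H̄` annihilates the constant configurations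
`U c`, while `π_{g_k} e_k = 0` gives `Π H̄ p = 0`. A nonzero edge vector means `p` takes two
different values at the endpoints of that edge, so `p` is not constant, i.e. not in the range
of `U`; since `U` is injective, `p` and the `d` columns of `U` are `d + 1` independent vectors
of the kernel of `L_B`, and rank–nullity gives the bound.
-/

open MeasureTheory Matrix
open scoped Kronecker

/-- The projection operator `π_y = I_d - y yᵀ`. -/
noncomputable def proj {d : ℕ} (y : Fin d → ℝ) : Matrix (Fin d) (Fin d) ℝ :=
  1 - Matrix.vecMulVec y y

/-- `H` is the incidence matrix of an oriented graph. -/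
def IsIncidence {m n : ℕ} (H : Matrix (Fin m) (Fin n) ℝ) : Prop :=
  ∃ head tail : Fin m → Fin n, (∀ k, head k ≠ tail k) ∧
    ∀ k i, H k i = if i = head k then 1 else if i = tail k then -1 else 0

/-- `H̄ = H ⊗ I_d`. -/
noncomputable def Hbar {m n : ℕ} (d : ℕ) (H : Matrix (Fin m) (Fin n) ℝ) :
    Matrix (Fin m × Fin d) (Fin n × Fin d) ℝ :=
  H ⊗ₖ (1 : Matrix (Fin d) (Fin d) ℝ)

/-- `Π = blkdiag(π_{g_1}, …, π_{g_m})`. -/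
noncomputable def blkProj {m d : ℕ} (g : Fin m → Fin d → ℝ) :
    Matrix (Fin m × Fin d) (Fin m × Fin d) ℝ :=
  Matrix.of fun p q => if p.1 = q.1 then proj (g p.1) p.2 q.2 else 0

/-- Euclidean norm of a vector in `ℝ^d` given as `Fin d → ℝ`. -/
noncomputable def enorm {d : ℕ} (v : Fin d → ℝ) : ℝ := Real.sqrt (v ⬝ᵥ v)

/-- The bearing (unit vector) of a nonzero vector. -/
noncomputable def bearingOf {d : ℕ} (v : Fin d → ℝ) : Fin d → ℝ := (_root_.enorm v)⁻¹ • v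

/-- The `k`-th edge vector `e_k = (H̄ p)_k ∈ ℝ^d` of a configuration `p`. -/
noncomputable def edgeVec {m n d : ℕ} (H : Matrix (Fin m) (Fin n) ℝ)
    (p : Fin n × Fin d → ℝ) (k : Fin m) : Fin d → ℝ :=
  fun i => (Hbar d H).mulVec p (k, i)

/-- The bearing Laplacian `L_B = H̄ᵀ Π H̄` of a configuration `p`. -/
noncomputable def LB {m n : ℕ} {d : ℕ} (H : Matrix (Fin m) (Fin n) ℝ)
    (p : Fin n × Fin d → ℝ) : Matrix (Fin n × Fin d) (Fin n × Fin d) ℝ :=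
  (Hbar d H)ᵀ * blkProj (fun k => bearingOf (edgeVec H p k)) * Hbar d H

/-- `U = 1_n ⊗ I_d`. -/
noncomputable def Umat (n d : ℕ) : Matrix (Fin n × Fin d) (Fin d) ℝ :=
  Matrix.of fun p j => if p.2 = j then 1 else 0

lemma proj_bearingOf_mulVec_self {d : ℕ} {v : Fin d → ℝ} (hv : v ≠ 0) :
    proj (bearingOf v) *ᵥ v = 0 := by
  have hvv : 0 < v ⬝ᵥ v :=
    lt_of_le_of_ne (Finset.sum_nonneg fun j _ => mul_self_nonneg (v j))
      (Ne.symm (dotProduct_self_eq_zero.not.mpr hv))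
  have hsq : _root_.enorm v * _root_.enorm v = v ⬝ᵥ v := Real.mul_self_sqrt hvv.le
  have hne : _root_.enorm v ≠ 0 := fun h => by simp [h] at hsq; exact hvv.ne' hsq.symm
  have hcoef : (_root_.enorm v)⁻¹ * (v ⬝ᵥ v) * (_root_.enorm v)⁻¹ = 1 := by
    rw [← hsq]; field_simp
  rw [proj, sub_mulVec, one_mulVec, vecMulVec_mulVec, op_smul_eq_smul, bearingOf,
    smul_dotProduct, smul_eq_mul, smul_smul, hcoef, one_smul, sub_self]

lemma IsIncidence.exists_mulVec_apply_eq_sub {m n : ℕ} {H : Matrix (Fin m) (Fin n) ℝ}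
    (hH : IsIncidence H) (k : Fin m) :
    ∃ a b : Fin n, ∀ x : Fin n → ℝ, (H *ᵥ x) k = x a - x b := by
  obtain ⟨head, tail, hne, hH⟩ := hH
  have hrow : H k = Pi.single (head k) 1 - Pi.single (tail k) 1 := by
    ext i
    rw [hH]
    by_cases h₁ : i = head k
    · subst h₁; simp [hne k]
    · by_cases h₂ : i = tail k
      · subst h₂; simp [h₁]
      · simp [h₁, h₂]
  refine ⟨head k, tail k, fun x => ?_⟩
  change H k ⬝ᵥ x = _
  rw [hrow, sub_dotProduct, single_dotProduct, single_dotProduct, one_mul, one_mul]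

section Configuration

variable {m n d : ℕ}

lemma Hbar_mulVec_apply (H : Matrix (Fin m) (Fin n) ℝ) (v : Fin n × Fin d → ℝ)
    (k : Fin m) (i : Fin d) : (Hbar d H *ᵥ v) (k, i) = (H *ᵥ fun j => v (j, i)) k := by
  simp only [Hbar, mulVec, dotProduct, Fintype.sum_prod_type, kroneckerMap_apply, one_apply,
    mul_ite, mul_one, mul_zero, ite_mul, zero_mul, Finset.sum_ite_eq, Finset.mem_univ, if_true]

lemma Umat_mulVec_apply (c : Fin d → ℝ) (q : Fin n × Fin d) : (Umat n d *ᵥ c) q = c q.2 := by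
  simp [Umat, mulVec, dotProduct]

lemma IsIncidence.Hbar_mulVec_Umat_mulVec {H : Matrix (Fin m) (Fin n) ℝ} (hH : IsIncidence H)
    (c : Fin d → ℝ) : Hbar d H *ᵥ (Umat n d *ᵥ c) = 0 := by
  ext ⟨k, i⟩
  obtain ⟨a, b, hab⟩ := hH.exists_mulVec_apply_eq_sub k
  simp only [Hbar_mulVec_apply, Umat_mulVec_apply, hab, sub_self, Pi.zero_apply]

lemma IsIncidence.exists_ne_of_edgeVec_ne_zero {H : Matrix (Fin m) (Fin n) ℝ}
    (hH : IsIncidence H) {p : Fin n × Fin d → ℝ} {k : Fin m} (hk : edgeVec H p k ≠ 0) :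
    ∃ a b : Fin n, ∃ i : Fin d, p (a, i) ≠ p (b, i) := by
  obtain ⟨a, b, hab⟩ := hH.exists_mulVec_apply_eq_sub k
  obtain ⟨i, hi⟩ := Function.ne_iff.mp hk
  refine ⟨a, b, i, sub_ne_zero.mp ?_⟩
  simpa only [edgeVec, Hbar_mulVec_apply, hab, Pi.zero_apply] using hi

lemma blkProj_mulVec_apply (g : Fin m → Fin d → ℝ) (v : Fin m × Fin d → ℝ) (k : Fin m)
    (i : Fin d) : (blkProj g *ᵥ v) (k, i) = (proj (g k) *ᵥ fun j => v (k, j)) i := by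
  simp only [mulVec, dotProduct, Fintype.sum_prod_type, blkProj, of_apply]
  rw [Finset.sum_eq_single k (fun k' _ hk' => by simp [Ne.symm hk']) (by simp)]
  simp

lemma blkProj_mulVec_Hbar_mulVec_self (H : Matrix (Fin m) (Fin n) ℝ) (p : Fin n × Fin d → ℝ)
    (hp : ∀ k, edgeVec H p k ≠ 0) :
    blkProj (fun k => bearingOf (edgeVec H p k)) *ᵥ (Hbar d H *ᵥ p) = 0 := by
  ext ⟨k, i⟩
  rw [blkProj_mulVec_apply]
  exact congrFun (proj_bearingOf_mulVec_self (hp k)) i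

lemma LB_mulVec_self (H : Matrix (Fin m) (Fin n) ℝ) (p : Fin n × Fin d → ℝ)
    (hp : ∀ k, edgeVec H p k ≠ 0) : LB H p *ᵥ p = 0 := by
  rw [LB, ← mulVec_mulVec, ← mulVec_mulVec, blkProj_mulVec_Hbar_mulVec_self H p hp, mulVec_zero]

lemma IsIncidence.LB_mulVec_Umat_mulVec {H : Matrix (Fin m) (Fin n) ℝ} (hH : IsIncidence H)
    (p : Fin n × Fin d → ℝ) (c : Fin d → ℝ) : LB H p *ᵥ (Umat n d *ᵥ c) = 0 := by
  rw [LB, ← mulVec_mulVec, hH.Hbar_mulVec_Umat_mulVec, mulVec_zero]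

lemma LB_eq_zero_of_isEmpty [IsEmpty (Fin m)] (H : Matrix (Fin m) (Fin n) ℝ)
    (p : Fin n × Fin d → ℝ) : LB H p = 0 := by
  simp [LB, Subsingleton.elim (Hbar d H) 0]

end Configuration

lemma Matrix.rank_add_card_le_of_mulVec_eq_zero {ι ι' κ K : Type*} [Fintype ι] [Fintype κ]
    [Field K] (A : Matrix ι' ι K) {v : κ → ι → K} (hv : LinearIndependent K v)
    (hA : ∀ k, A *ᵥ v k = 0) : A.rank + Fintype.card κ ≤ Fintype.card ι := by
  have hker : LinearIndependent K fun k => (⟨v k, hA k⟩ : LinearMap.ker A.mulVecLin) :=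
    .of_comp (LinearMap.ker A.mulVecLin).subtype hv
  have hdim := LinearMap.finrank_range_add_finrank_ker A.mulVecLin
  rw [Module.finrank_fintype_fun_eq_card] at hdim
  rw [rank, ← hdim]
  exact Nat.add_le_add_left hker.fintype_card_le_finrank _

lemma linearIndependent_option_elim_Umat_col {n d : ℕ} {p : Fin n × Fin d → ℝ} {a b : Fin n}
    {i : Fin d} (hp : p (a, i) ≠ p (b, i)) :
    LinearIndependent ℝ fun o : Option (Fin d) => o.elim p (Umat n d).col := by
  have hcol : LinearIndependent ℝ (Umat n d).col :=
    mulVec_injective_iff.mp fun x y hxy => funext fun j => by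
      simpa only [Umat_mulVec_apply] using congrFun hxy (a, j)
  have hp_notMem : p ∉ Submodule.span ℝ (Set.range (Umat n d).col) := by
    intro hmem
    obtain ⟨c, rfl⟩ := (range_mulVecLin (Umat n d)).symm ▸ hmem
    simp only [mulVecLin_apply, Umat_mulVec_apply] at hp
    exact hp rfl
  exact linearIndependent_option.mpr ⟨hcol, hp_notMem⟩

theorem statement_2_general {d m n : ℕ}
    (H : Matrix (Fin m) (Fin n) ℝ) (hH : IsIncidence H)
    (p : Fin n × Fin d → ℝ)
    (hnz : ∀ k : Fin m, edgeVec H p k ≠ 0) :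
    (∀ c : Fin d → ℝ, (LB H p).mulVec ((Umat n d).mulVec c) = 0) ∧
      (LB H p).mulVec p = 0 ∧
      (LB H p).rank ≤ d * n - d - 1 := by
  refine ⟨hH.LB_mulVec_Umat_mulVec p, LB_mulVec_self H p hnz, ?_⟩
  obtain _ | m := m
  · simp [LB_eq_zero_of_isEmpty]
  obtain ⟨a, b, i, hab⟩ := hH.exists_ne_of_edgeVec_ne_zero (hnz 0)
  have hker : ∀ o : Option (Fin d), LB H p *ᵥ o.elim p (Umat n d).col = 0
    | none => LB_mulVec_self H p hnz
    | some j => by rw [Option.elim_some, ← mulVec_single_one]; exact hH.LB_mulVec_Umat_mulVec p _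
  have hrank := (LB H p).rank_add_card_le_of_mulVec_eq_zero
    (linearIndependent_option_elim_Umat_col hab) hker
  simp only [Fintype.card_option, Fintype.card_prod, Fintype.card_fin] at hrank
  rw [Nat.mul_comm] at hrank
  omega

/-- the column span of `U` together with `p` lies in the null space of
`L_B`, hence `rank L_B ≤ dn - d - 1`. -/
theorem statement_2 {d m n : ℕ} (hd : 2 ≤ d)
    (H : Matrix (Fin m) (Fin n) ℝ) (hH : IsIncidence H)
    (p : Fin n × Fin d → ℝ)
    (hnz : ∀ k : Fin m, edgeVec H p k ≠ 0) :
    (∀ c : Fin d → ℝ, (LB H p).mulVec ((Umat n d).mulVec c) = 0) ∧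
      (LB H p).mulVec p = 0 ∧
      (LB H p).rank ≤ d * n - d - 1 :=
  statement_2_general H hH p hnz
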